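/- Let G ⊆ E be compact, each T'_j continuous with each T_i a self-map of G, let C := {x ∈ G : T_i x = x for every i with η_i > 0} be nonempty, and suppose Σ_{i∈𝕀} η_i ‖T_i x − y‖_p² < ‖x − y‖_p² for every y ∈ C and x ∈ G \ C. Suppose θ : [0,∞) → [0,∞) is continuous with θ(0) = 0 and 0 < θ(t) ≤ t for t ∈ (0, t̄), that for EVERY μ₀ ∈ 𝒫₂(G) the sequence μ_{k+1} := μ_k𝒫 satisfies d_{W2,p}(μ_{k+1}, inv𝒫) ≤ θ(d_{W2,p}(μ_k, inv𝒫)) for all k, and that (Id − θ)⁻¹ exists on [0,∞), is continuous and strictly increasing with (Id − θ)⁻¹(0) = 0. Then Ψ is gauge metrically subregular for 0 with gauge (Id − θ)⁻¹: for every μ ∈ 𝒫₂(G), d_{W2,p}(μ, inv𝒫) ≤ (Id − θ)⁻¹(Ψ(μ)). -/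

import Mathlib

/-!
Invariant measures in `𝒫₂(G)` live on the common fixed-point set `C`: integrated against an
invariant measure, the strict Fejér inequality `∑ᵢ ηᵢ ‖Tᵢx − y‖²_p < ‖x − y‖²_p` (`y ∈ C`,
`x ∈ G \ C`) turns into an equality, so it can fail only on a null set. Hence, for an invariant `π`
and a coupling `γ` of `(μ, π)`, the integrand of `Ψ` reduces to `∑ᵢ ηᵢ ‖x − Tᵢx‖²_p`, the cost of
the coupling `∑ᵢ ηᵢ (id, Tᵢ)_*μ` of `μ` and `μ𝒫`; thus `d_{W2,p}(μ, μ𝒫) ≤ Ψ(μ)`. The triangle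
inequality for `d_{W2,p}` (glue two couplings along their common marginal, then Minkowski in `L²`)
and one step of gauge monotonicity give `d ≤ d_{W2,p}(μ, μ𝒫) + θ d` for `d = d_{W2,p}(μ, inv𝒫)`,
so `(Id − θ) d ≤ Ψ(μ)`, and applying the increasing map `(Id − θ)⁻¹` finishes.
-/

open Finset MeasureTheory Filter
open scoped RealInnerProductSpace

noncomputable section

variable {m : ℕ} {I : Type*} [Fintype I]
variable {E : Fin m → Type*} [∀ j, NormedAddCommGroup (E j)]
  [∀ j, InnerProductSpace ℝ (E j)] [∀ j, FiniteDimensional ℝ (E j)]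
variable [∀ j, MeasurableSpace (E j)] [∀ j, BorelSpace (E j)]
variable [MeasurableSpace (PiLp 2 E)] [BorelSpace (PiLp 2 E)]

/-- The blockwise map `T_i`: applies `T'_j` on the blocks `j ∈ M i`, identity elsewhere. -/
def blockMap (M : I → Finset (Fin m)) (T' : ∀ j, PiLp 2 E → E j)
    (i : I) (x : PiLp 2 E) : PiLp 2 E :=
  WithLp.toLp 2 (fun j => if j ∈ M i then T' j x else x j)

/-- The squared weighted norm `‖z‖_p²  =  ∑ⱼ pⱼ⁻¹ ‖zⱼ‖²`. -/
def wNormSq (pw : Fin m → ℝ) (z : PiLp 2 E) : ℝ :=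
  ∑ j, (pw j)⁻¹ * ‖z j‖ ^ 2

/-- The weighted norm `‖z‖_p`. -/
def wNorm (pw : Fin m → ℝ) (z : PiLp 2 E) : ℝ :=
  Real.sqrt (wNormSq pw z)

/-- `γ` is a coupling of `μ` and `ν`. -/
def IsCoupling (γ : Measure (PiLp 2 E × PiLp 2 E)) (μ ν : Measure (PiLp 2 E)) : Prop :=
  IsProbabilityMeasure γ ∧ γ.map Prod.fst = μ ∧ γ.map Prod.snd = ν

/-- The transport cost `(∫ ‖x−y‖_p² dγ)^{1/2}` of a coupling `γ`. -/
def couplingCost (pw : Fin m → ℝ) (γ : Measure (PiLp 2 E × PiLp 2 E)) : ℝ :=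
  Real.sqrt (∫ z, wNormSq pw (z.1 - z.2) ∂γ)

/-- The weighted Wasserstein-2 distance `d_{W2,p}`. -/
def W2 (pw : Fin m → ℝ) (μ ν : Measure (PiLp 2 E)) : ℝ :=
  sInf {r | ∃ γ, IsCoupling γ μ ν ∧ r = couplingCost pw γ}

/-- `γ` is an optimal coupling of `(μ, ν)` w.r.t. `d_{W2,p}`. -/
def IsOptimalCoupling (pw : Fin m → ℝ) (γ : Measure (PiLp 2 E × PiLp 2 E))
    (μ ν : Measure (PiLp 2 E)) : Prop :=
  IsCoupling γ μ ν ∧ couplingCost pw γ = W2 pw μ ν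

/-- The Markov operator `μ ↦ μ𝒫 = ∑ᵢ ηᵢ (Tᵢ)_* μ`. -/
def markovOp (η : I → ℝ) (T : I → PiLp 2 E → PiLp 2 E)
    (μ : Measure (PiLp 2 E)) : Measure (PiLp 2 E) :=
  ∑ i : I, (ENNReal.ofReal (η i)) • μ.map (T i)

/-- `μ ∈ 𝒫₂(G)` : Borel probability measure concentrated on `G` with finite second moment. -/
def MemP2 (G : Set (PiLp 2 E)) (μ : Measure (PiLp 2 E)) : Prop :=
  IsProbabilityMeasure μ ∧ μ Gᶜ = 0 ∧ Integrable (fun x => ‖x‖ ^ 2) μ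

/-- `d_{W2,p}(μ, inv𝒫)` : distance from `μ` to the invariant measures in `𝒫₂(G)`. -/
def dInv (pw : Fin m → ℝ) (η : I → ℝ) (T : I → PiLp 2 E → PiLp 2 E)
    (G : Set (PiLp 2 E)) (μ : Measure (PiLp 2 E)) : ℝ :=
  sInf {r | ∃ π, markovOp η T π = π ∧ MemP2 G π ∧ r = W2 pw μ π}

/-- The expected weighted transport discrepancy `∑ᵢ ηᵢ ψ_p(x, y, Tᵢx, Tᵢy)`. -/
def discrep (pw : Fin m → ℝ) (η : I → ℝ) (T : I → PiLp 2 E → PiLp 2 E)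
    (z : PiLp 2 E × PiLp 2 E) : ℝ :=
  ∑ i : I, η i * wNormSq pw ((z.1 - T i z.1) - (z.2 - T i z.2))

/-- The invariant Markov transport discrepancy `Ψ`. -/
def Psi (pw : Fin m → ℝ) (η : I → ℝ) (T : I → PiLp 2 E → PiLp 2 E)
    (G : Set (PiLp 2 E)) (μ : Measure (PiLp 2 E)) : ℝ :=
  sInf {r | ∃ π γ, markovOp η T π = π ∧ MemP2 G π ∧ IsOptimalCoupling pw γ μ π ∧
    r = Real.sqrt (∫ z, discrep pw η T z ∂γ)}

/-- `id - θ` is continuous and injective on `[0, ∞)` (it has the left inverse `ψ`), hence strictly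
monotone there; it increases since it vanishes at `0` and equals `1` at `ψ 1 > 0`. -/
lemma sub_nonneg_of_leftInvOn {θ ψ : ℝ → ℝ} (hθ : ContinuousOn θ (Set.Ici 0)) (hθ0 : θ 0 = 0)
    (hψ : StrictMonoOn ψ (Set.Ici 0)) (hψ0 : ψ 0 = 0)
    (hleft : ∀ t, 0 ≤ t → ψ (t - θ t) = t) (hright : ∀ s, 0 ≤ s → ψ s - θ (ψ s) = s)
    {t : ℝ} (ht : 0 ≤ t) : 0 ≤ t - θ t := by
  set u := ψ 1
  have hu : 0 < u := hψ0 ▸ hψ (Set.mem_Ici.2 le_rfl) (Set.mem_Ici.2 zero_le_one) zero_lt_one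
  have hfu : u - θ u = 1 := hright 1 zero_le_one
  have hinj : Set.InjOn (fun s => s - θ s) (Set.Icc 0 (max t u)) := fun x hx y hy hxy => by
    rw [← hleft x hx.1, ← hleft y hy.1]
    exact congrArg ψ hxy
  rcases (continuousOn_id.sub (hθ.mono Set.Icc_subset_Ici_self)).strictMonoOn_of_injOn_Icc'
    (le_max_of_le_left ht) hinj with hmono | hanti
  · have := hmono.monotoneOn ⟨le_rfl, le_max_of_le_left ht⟩ ⟨ht, le_max_left _ _⟩ ht
    simpa only [Pi.sub_apply, id, hθ0, sub_zero] using this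
  · have := hanti ⟨le_rfl, le_max_of_le_left ht⟩ ⟨hu.le, le_max_right _ _⟩ hu
    simp only [Pi.sub_apply, id, hθ0, sub_zero] at this
    linarith

lemma MeasureTheory.MemLp.sqrt_integral_norm_sq {α F : Type*} [MeasurableSpace α] {μ : Measure α}
    [NormedAddCommGroup F] {f : α → F} (hf : MemLp f 2 μ) :
    √(∫ x, ‖f x‖ ^ 2 ∂μ) = (eLpNorm f 2 μ).toReal := by
  rw [hf.eLpNorm_eq_integral_rpow_norm two_ne_zero ENNReal.ofNat_ne_top,
    ENNReal.toReal_ofReal (by positivity), Real.sqrt_eq_rpow]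
  norm_num

lemma sqrt_integral_norm_add_sq_le {α F : Type*} [MeasurableSpace α] {μ : Measure α}
    [NormedAddCommGroup F] {f g : α → F} (hf : MemLp f 2 μ) (hg : MemLp g 2 μ) :
    √(∫ x, ‖f x + g x‖ ^ 2 ∂μ) ≤ √(∫ x, ‖f x‖ ^ 2 ∂μ) + √(∫ x, ‖g x‖ ^ 2 ∂μ) := by
  have hfg := (hf.add hg).sqrt_integral_norm_sq
  simp only [Pi.add_apply] at hfg
  rw [hfg, hf.sqrt_integral_norm_sq, hg.sqrt_integral_norm_sq]
  exact ENNReal.toReal_le_add (eLpNorm_add_le hf.1 hg.1 one_le_two) hf.eLpNorm_ne_top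
    hg.eLpNorm_ne_top

open ProbabilityTheory in
lemma exists_glue {X Y Z : Type*} [MeasurableSpace X] [MeasurableSpace Y] [MeasurableSpace Z]
    [StandardBorelSpace X] [Nonempty X] [StandardBorelSpace Z] [Nonempty Z]
    (γ₁ : Measure (X × Y)) (γ₂ : Measure (Y × Z)) [IsProbabilityMeasure γ₁]
    [IsProbabilityMeasure γ₂] (h : γ₁.snd = γ₂.fst) :
    ∃ ξ : Measure (Y × X × Z), IsProbabilityMeasure ξ ∧
      ξ.map (fun p => (p.2.1, p.1)) = γ₁ ∧ ξ.map (fun p => (p.1, p.2.2)) = γ₂ := by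
  set ρ := γ₁.map Prod.swap
  have hρ : ρ.fst = γ₂.fst := by rw [Measure.fst_map_swap, h]
  -- given the middle coordinate, draw the outer two independently from the disintegrations
  refine ⟨γ₂.fst ⊗ₘ (ρ.condKernel ×ₖ γ₂.condKernel), inferInstance, ?_, ?_⟩
  · have : (fun p : Y × X × Z => (p.2.1, p.1)) = Prod.swap ∘ Prod.map id Prod.fst := rfl
    rw [this, ← Measure.map_map measurable_swap (measurable_id.prodMap measurable_fst),
      ← Measure.compProd_map measurable_fst, ← Kernel.fst_eq, Kernel.fst_prod, ← hρ,
      ρ.disintegrate, Measure.map_map measurable_swap measurable_swap]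
    simp
  · change Measure.map (Prod.map id Prod.snd) _ = _
    rw [← Measure.compProd_map measurable_snd, ← Kernel.snd_eq, Kernel.snd_prod,
      γ₂.disintegrate]

section QuadCost

variable {X F : Type*} [MeasurableSpace X] [NormedAddCommGroup F]

def quadCost (φ : X → F) (γ : Measure (X × X)) : ℝ :=
  √(∫ z, ‖φ z.1 - φ z.2‖ ^ 2 ∂γ)

lemma exists_quadCost_le_add [StandardBorelSpace X] [Nonempty X] {φ : X → F}
    (hφ : StronglyMeasurable φ) {γ₁ γ₂ : Measure (X × X)} [IsProbabilityMeasure γ₁]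
    [IsProbabilityMeasure γ₂] (h : γ₁.snd = γ₂.fst)
    (h₁ : MemLp (fun z => φ z.1 - φ z.2) 2 γ₁) (h₂ : MemLp (fun z => φ z.1 - φ z.2) 2 γ₂) :
    ∃ γ₃ : Measure (X × X), IsProbabilityMeasure γ₃ ∧ γ₃.fst = γ₁.fst ∧ γ₃.snd = γ₂.snd ∧
      quadCost φ γ₃ ≤ quadCost φ γ₁ + quadCost φ γ₂ := by
  obtain ⟨ξ, hξ, hξ₁, hξ₂⟩ := exists_glue γ₁ γ₂ h
  set c : X × X → F := fun z => φ z.1 - φ z.2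
  have hc : StronglyMeasurable c :=
    (hφ.comp_measurable measurable_fst).sub (hφ.comp_measurable measurable_snd)
  have hc2 : StronglyMeasurable fun z => ‖c z‖ ^ 2 := hc.norm.pow 2
  have hπ₁ : Measurable fun p : X × X × X => (p.2.1, p.1) := by fun_prop
  have hπ₂ : Measurable fun p : X × X × X => (p.1, p.2.2) := by fun_prop
  have hπ₃ : Measurable fun p : X × X × X => (p.2.1, p.2.2) := by fun_prop
  refine ⟨ξ.map fun p => (p.2.1, p.2.2), Measure.isProbabilityMeasure_map hπ₃.aemeasurable,
    ?_, ?_, ?_⟩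
  · rw [← hξ₁, Measure.fst, Measure.fst, Measure.map_map measurable_fst hπ₃,
      Measure.map_map measurable_fst hπ₁]
    rfl
  · rw [← hξ₂, Measure.snd, Measure.snd, Measure.map_map measurable_snd hπ₃,
      Measure.map_map measurable_snd hπ₂]
    rfl
  have ha : MemLp (c ∘ fun p : X × X × X => (p.2.1, p.1)) 2 ξ :=
    (memLp_map_measure_iff hc.aestronglyMeasurable hπ₁.aemeasurable).1 (hξ₁ ▸ h₁)
  have hb : MemLp (c ∘ fun p : X × X × X => (p.1, p.2.2)) 2 ξ :=
    (memLp_map_measure_iff hc.aestronglyMeasurable hπ₂.aemeasurable).1 (hξ₂ ▸ h₂)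
  have hsum := sqrt_integral_norm_add_sq_le ha hb
  simp only [Function.comp_apply, c, sub_add_sub_cancel] at hsum
  unfold quadCost
  rw [← hξ₁, ← hξ₂, integral_map hπ₁.aemeasurable hc2.aestronglyMeasurable,
    integral_map hπ₂.aemeasurable hc2.aestronglyMeasurable,
    integral_map hπ₃.aemeasurable hc2.aestronglyMeasurable]
  exact hsum

end QuadCost

lemma Continuous.integrable_of_isCompact_of_measure_compl {α F : Type*} [TopologicalSpace α]
    [MeasurableSpace α] [OpensMeasurableSpace α] [NormedAddCommGroup F]
    [SecondCountableTopologyEither α F] {μ : Measure α}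
    [IsFiniteMeasure μ] {s : Set α} (hs : IsCompact s) (hμ : μ sᶜ = 0) {f : α → F}
    (hf : Continuous f) : Integrable f μ := by
  obtain ⟨C, hC⟩ := hs.exists_bound_of_continuousOn hf.continuousOn
  refine Integrable.mono' (integrable_const C) hf.aestronglyMeasurable ?_
  filter_upwards [mem_ae_iff.2 hμ] with x hx using hC x hx

section Mixture

variable {α β : Type*} [MeasurableSpace α] [MeasurableSpace β] {η : I → ℝ}

lemma isProbabilityMeasure_mixture (hη : ∀ i, 0 ≤ η i) (hηsum : ∑ i, η i = 1)
    (ν : I → Measure α) [∀ i, IsProbabilityMeasure (ν i)] :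
    IsProbabilityMeasure (∑ i, ENNReal.ofReal (η i) • ν i) := by
  constructor
  simp only [Measure.coe_finsetSum, Measure.coe_smul, Finset.sum_apply, Pi.smul_apply,
    measure_univ, smul_eq_mul, mul_one]
  rw [← ENNReal.ofReal_sum_of_nonneg fun i _ => hη i, hηsum, ENNReal.ofReal_one]

lemma mixture_const (hη : ∀ i, 0 ≤ η i) (hηsum : ∑ i, η i = 1) (ν : Measure α) :
    ∑ i, ENNReal.ofReal (η i) • ν = ν := by
  rw [← Finset.sum_smul, ← ENNReal.ofReal_sum_of_nonneg fun i _ => hη i, hηsum,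
    ENNReal.ofReal_one, one_smul]

lemma map_mixture {f : α → β} (hf : Measurable f) (ν : I → Measure α) :
    (∑ i, ENNReal.ofReal (η i) • ν i).map f = ∑ i, ENNReal.ofReal (η i) • (ν i).map f := by
  simp only [Measure.map_finset_sum' hf.aemeasurable, Measure.map_smul]

lemma integral_mixture_map (hη : ∀ i, 0 ≤ η i) (μ : Measure α) {g : I → α → β}
    (hg : ∀ i, Measurable (g i)) {f : β → ℝ} (hf : StronglyMeasurable f)
    (hint : ∀ i, Integrable (f ∘ g i) μ) :
    ∫ y, f y ∂(∑ i, ENNReal.ofReal (η i) • μ.map (g i)) = ∑ i, η i * ∫ x, f (g i x) ∂μ := by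
  have hint' : ∀ i, Integrable f (μ.map (g i)) := fun i =>
    (integrable_map_measure hf.aestronglyMeasurable (hg i).aemeasurable).2 (hint i)
  rw [integral_finsetSum_measure fun i _ => (hint' i).smul_measure ENNReal.ofReal_ne_top]
  refine Finset.sum_congr rfl fun i _ => ?_
  rw [integral_smul_measure, ENNReal.toReal_ofReal (hη i),
    integral_map (hg i).aemeasurable hf.aestronglyMeasurable, smul_eq_mul]

end Mixture

set_option linter.unusedSectionVars false

def wScale (pw : Fin m → ℝ) : PiLp 2 E →L[ℝ] PiLp 2 E where
  toFun z := WithLp.toLp 2 fun j => √(pw j)⁻¹ • z j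
  map_add' u v := by ext j; simp only [PiLp.add_apply, smul_add]
  map_smul' c z := by
    ext j
    simp only [PiLp.smul_apply, RingHom.id_apply]
    exact smul_comm _ _ _
  cont := (PiLp.continuous_toLp 2 E).comp <|
    continuous_pi fun j => (PiLp.continuous_apply 2 E j).const_smul _

variable {pw : Fin m → ℝ}

lemma sq_norm_wScale (hp : ∀ j, 0 ≤ pw j) (z : PiLp 2 E) :
    ‖wScale pw z‖ ^ 2 = wNormSq pw z := by
  rw [PiLp.norm_sq_eq_of_L2, wNormSq]
  refine Finset.sum_congr rfl fun j _ => ?_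
  simp only [wScale, ContinuousLinearMap.coe_mk', LinearMap.coe_mk, AddHom.coe_mk,
    PiLp.toLp_apply, norm_smul, Real.norm_eq_abs, abs_of_nonneg (Real.sqrt_nonneg _), mul_pow,
    Real.sq_sqrt (inv_nonneg.2 (hp j))]

lemma continuous_wNormSq : Continuous (wNormSq (E := E) pw) :=
  continuous_finsetSum _ fun j _ =>
    continuous_const.mul ((PiLp.continuous_apply 2 E j).norm.pow 2)

lemma couplingCost_eq_quadCost (hp : ∀ j, 0 ≤ pw j) (γ : Measure (PiLp 2 E × PiLp 2 E)) :
    couplingCost pw γ = quadCost (wScale pw) γ := by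
  simp only [couplingCost, quadCost, ← map_sub, sq_norm_wScale hp]

lemma MemP2.memLp_two {G : Set (PiLp 2 E)} {μ : Measure (PiLp 2 E)} (hμ : MemP2 G μ) :
    MemLp id 2 μ :=
  (memLp_two_iff_integrable_sq_norm aestronglyMeasurable_id).2 hμ.2.2

lemma IsCoupling.memLp_wScale_sub {γ : Measure (PiLp 2 E × PiLp 2 E)} {μ ν : Measure (PiLp 2 E)}
    (hγ : IsCoupling γ μ ν) (hμ : MemLp id 2 μ) (hν : MemLp id 2 ν) :
    MemLp (fun z => wScale pw z.1 - wScale pw z.2) 2 γ := by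
  rw [← hγ.2.1] at hμ
  rw [← hγ.2.2] at hν
  have h₁ : MemLp Prod.fst 2 γ :=
    (memLp_map_measure_iff aestronglyMeasurable_id measurable_fst.aemeasurable).1 hμ
  have h₂ : MemLp Prod.snd 2 γ :=
    (memLp_map_measure_iff aestronglyMeasurable_id measurable_snd.aemeasurable).1 hν
  simpa only [Pi.sub_def, Function.comp_def] using
    ((wScale pw).comp_memLp' h₁).sub ((wScale pw).comp_memLp' h₂)

lemma isCoupling_prod (μ ν : Measure (PiLp 2 E)) [IsProbabilityMeasure μ]
    [IsProbabilityMeasure ν] : IsCoupling (μ.prod ν) μ ν :=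
  ⟨inferInstance, Measure.fst_prod, Measure.snd_prod⟩

lemma W2_le_couplingCost {γ : Measure (PiLp 2 E × PiLp 2 E)} {μ ν : Measure (PiLp 2 E)}
    (h : IsCoupling γ μ ν) : W2 pw μ ν ≤ couplingCost pw γ :=
  csInf_le ⟨0, by rintro _ ⟨γ, _, rfl⟩; exact Real.sqrt_nonneg _⟩ ⟨γ, h, rfl⟩

lemma W2_nonneg (μ ν : Measure (PiLp 2 E)) : 0 ≤ W2 pw μ ν :=
  Real.sInf_nonneg <| by rintro _ ⟨γ, _, rfl⟩; exact Real.sqrt_nonneg _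

lemma W2_triangle (hp : ∀ j, 0 ≤ pw j) {G : Set (PiLp 2 E)} {μ ν κ : Measure (PiLp 2 E)}
    (hμ : MemP2 G μ) (hν : MemP2 G ν) (hκ : MemP2 G κ) :
    W2 pw μ κ ≤ W2 pw μ ν + W2 pw ν κ := by
  have := hμ.1; have := hν.1; have := hκ.1
  have glue : ∀ γ₁ γ₂, IsCoupling γ₁ μ ν → IsCoupling γ₂ ν κ →
      W2 pw μ κ ≤ couplingCost pw γ₁ + couplingCost pw γ₂ := by
    intro γ₁ γ₂ h₁ h₂
    have := h₁.1; have := h₂.1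
    obtain ⟨γ₃, hγ₃, hfst, hsnd, hcost⟩ :=
      exists_quadCost_le_add (wScale pw).continuous.stronglyMeasurable
        (h₁.2.2.trans h₂.2.1.symm) (h₁.memLp_wScale_sub hμ.memLp_two hν.memLp_two)
        (h₂.memLp_wScale_sub hν.memLp_two hκ.memLp_two)
    rw [couplingCost_eq_quadCost hp, couplingCost_eq_quadCost hp]
    calc W2 pw μ κ ≤ couplingCost pw γ₃ :=
          W2_le_couplingCost ⟨hγ₃, hfst.trans h₁.2.1, hsnd.trans h₂.2.2⟩
      _ ≤ _ := (couplingCost_eq_quadCost hp γ₃).trans_le hcost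
  suffices W2 pw μ κ - W2 pw ν κ ≤ W2 pw μ ν by linarith
  refine le_csInf ⟨_, _, isCoupling_prod μ ν, rfl⟩ ?_
  rintro _ ⟨γ₁, h₁, rfl⟩
  suffices W2 pw μ κ - couplingCost pw γ₁ ≤ W2 pw ν κ by linarith
  refine le_csInf ⟨_, _, isCoupling_prod ν κ, rfl⟩ ?_
  rintro _ ⟨γ₂, h₂, rfl⟩
  linarith [glue γ₁ γ₂ h₁ h₂]

lemma IsCoupling.couplingCost_dirac {γ : Measure (PiLp 2 E × PiLp 2 E)} {μ : Measure (PiLp 2 E)}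
    {c : PiLp 2 E} (h : IsCoupling γ μ (Measure.dirac c)) :
    couplingCost pw γ = √(∫ x, wNormSq pw (x - c) ∂μ) := by
  have hc : ∀ᵐ z ∂γ, z.2 = c := ae_of_ae_map (p := fun y => y = c) measurable_snd.aemeasurable <| by
    rw [h.2.2, ae_dirac_eq]; exact eventually_pure.2 rfl
  have hf : Continuous fun x : PiLp 2 E => wNormSq pw (x - c) :=
    continuous_wNormSq.comp (continuous_id.sub continuous_const)
  rw [couplingCost, integral_congr_ae (hc.mono fun z hz => by rw [hz]), ← h.2.1,
    integral_map measurable_fst.aemeasurable hf.aestronglyMeasurable]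

lemma isOptimalCoupling_prod_dirac (μ : Measure (PiLp 2 E)) [IsProbabilityMeasure μ]
    (c : PiLp 2 E) : IsOptimalCoupling pw (μ.prod (Measure.dirac c)) μ (Measure.dirac c) := by
  have h := isCoupling_prod μ (Measure.dirac c)
  refine ⟨h, le_antisymm ?_ (W2_le_couplingCost h)⟩
  refine le_csInf ⟨_, _, h, rfl⟩ ?_
  rintro _ ⟨γ, hγ, rfl⟩
  rw [h.couplingCost_dirac, hγ.couplingCost_dirac]

lemma continuous_blockMap {M : I → Finset (Fin m)} {T' : ∀ j, PiLp 2 E → E j}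
    (hcont : ∀ j, Continuous (T' j)) (i : I) : Continuous (blockMap M T' i) := by
  refine (PiLp.continuous_toLp 2 E).comp (continuous_pi fun j => ?_)
  by_cases hj : j ∈ M i
  · simpa [hj] using hcont j
  · simpa [hj] using PiLp.continuous_apply 2 E j

lemma memP2_of_isCompact {G : Set (PiLp 2 E)} (hG : IsCompact G) {μ : Measure (PiLp 2 E)}
    [IsProbabilityMeasure μ] (hμ : μ Gᶜ = 0) : MemP2 G μ :=
  ⟨inferInstance, hμ, (continuous_norm.pow 2).integrable_of_isCompact_of_measure_compl hG hμ⟩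

lemma memP2_dirac {G : Set (PiLp 2 E)} (hG : IsCompact G) {c : PiLp 2 E} (hc : c ∈ G) :
    MemP2 G (Measure.dirac c) :=
  memP2_of_isCompact hG <| by
    rw [Measure.dirac_apply' _ hG.isClosed.measurableSet.compl]
    simp [hc]

section Markov

variable {η : I → ℝ} {T : I → PiLp 2 E → PiLp 2 E} {G : Set (PiLp 2 E)}

lemma isProbabilityMeasure_markovOp (hη : ∀ i, 0 ≤ η i) (hηsum : ∑ i, η i = 1)
    (hT : ∀ i, Measurable (T i)) (μ : Measure (PiLp 2 E)) [IsProbabilityMeasure μ] :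
    IsProbabilityMeasure (markovOp η T μ) :=
  have := fun i => Measure.isProbabilityMeasure_map (μ := μ) (hT i).aemeasurable
  isProbabilityMeasure_mixture hη hηsum _

lemma markovOp_memP2 (hη : ∀ i, 0 ≤ η i) (hηsum : ∑ i, η i = 1) (hT : ∀ i, Measurable (T i))
    (hself : ∀ i, Set.MapsTo (T i) G G) (hG : IsCompact G) {μ : Measure (PiLp 2 E)}
    (hμ : MemP2 G μ) : MemP2 G (markovOp η T μ) := by
  have := hμ.1
  have := isProbabilityMeasure_markovOp hη hηsum hT μ
  refine memP2_of_isCompact hG ?_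
  simp only [markovOp, Measure.coe_finsetSum, Measure.coe_smul, Finset.sum_apply,
    Pi.smul_apply, Measure.map_apply (hT _) hG.isClosed.measurableSet.compl]
  refine Finset.sum_eq_zero fun i _ => ?_
  rw [measure_mono_null (show T i ⁻¹' Gᶜ ⊆ Gᶜ from fun x hx hxG => hx (hself i hxG)) hμ.2.1,
    smul_zero]

lemma markovOp_dirac (hη : ∀ i, 0 ≤ η i) (hηsum : ∑ i, η i = 1) (hT : ∀ i, Measurable (T i))
    {c : PiLp 2 E} (hc : ∀ i, 0 < η i → T i c = c) :
    markovOp η T (Measure.dirac c) = Measure.dirac c := by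
  conv_rhs => rw [← mixture_const hη hηsum (Measure.dirac c)]
  refine Finset.sum_congr rfl fun i _ => ?_
  rcases (hη i).lt_or_eq with hi | hi
  · rw [Measure.map_dirac' (hT i), hc i hi]
  · simp [← hi]

lemma sum_mul_apply_eq_of_fixed (hη : ∀ i, 0 ≤ η i) (hηsum : ∑ i, η i = 1) {x : PiLp 2 E}
    (hx : ∀ i, 0 < η i → T i x = x) (V : PiLp 2 E → ℝ) : ∑ i, η i * V (T i x) = V x := by
  calc ∑ i, η i * V (T i x) = ∑ i, η i * V x := Finset.sum_congr rfl fun i _ => by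
        rcases (hη i).lt_or_eq with hi | hi
        · rw [hx i hi]
        · simp [← hi]
    _ = V x := by rw [← Finset.sum_mul, hηsum, one_mul]

lemma ae_mem_of_markovOp_eq_self (hη : ∀ i, 0 ≤ η i) (hT : ∀ i, Continuous (T i))
    (hG : IsCompact G) {V : PiLp 2 E → ℝ} (hV : Continuous V)
    (hle : ∀ x ∈ G, ∑ i, η i * V (T i x) ≤ V x) {C : Set (PiLp 2 E)}
    (hlt : ∀ x ∈ G \ C, ∑ i, η i * V (T i x) < V x) {π : Measure (PiLp 2 E)}
    (hπ : markovOp η T π = π) (hπ₂ : MemP2 G π) : ∀ᵐ x ∂π, x ∈ C := by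
  have := hπ₂.1
  have hG_ae : ∀ᵐ x ∂π, x ∈ G := mem_ae_iff.2 hπ₂.2.1
  have hVT : ∀ i, Continuous fun x => V (T i x) := fun i => hV.comp (hT i)
  have hPV : Continuous fun x => ∑ i, η i * V (T i x) :=
    continuous_finsetSum _ fun i _ => (hVT i).const_mul _
  have hint : ∀ {f : PiLp 2 E → ℝ}, Continuous f → Integrable f π := fun hf =>
    hf.integrable_of_isCompact_of_measure_compl hG hπ₂.2.1
  set g : PiLp 2 E → ℝ := fun x => V x - ∑ i, η i * V (T i x)
  have hg_int : ∫ x, g x ∂π = 0 := by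
    have hinv : ∫ x, V x ∂π = ∑ i, η i * ∫ x, V (T i x) ∂π := by
      conv_lhs => rw [← hπ]
      exact integral_mixture_map hη π (fun i => (hT i).measurable) hV.stronglyMeasurable
        fun i => hint (hVT i)
    simp only [g]
    rw [integral_sub (hint hV) (hint hPV),
      integral_finsetSum _ fun i _ => (hint (hVT i)).const_mul _, hinv]
    simp only [integral_const_mul, sub_self]
  have hg_zero : g =ᵐ[π] 0 := (integral_eq_zero_iff_of_nonneg_ae
    (hG_ae.mono fun x hx => sub_nonneg.2 (hle x hx)) (hint (hV.sub hPV))).1 hg_int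
  filter_upwards [hg_zero, hG_ae] with x hgx hxG
  by_contra hxC
  have := hlt x ⟨hxG, hxC⟩
  simp only [g, Pi.zero_apply] at hgx
  linarith

lemma integral_discrep_eq (hη : ∀ i, 0 ≤ η i) {γ : Measure (PiLp 2 E × PiLp 2 E)}
    {μ π : Measure (PiLp 2 E)} (hγ : IsCoupling γ μ π)
    (hfix : ∀ᵐ y ∂π, ∀ i, 0 < η i → T i y = y)
    (hint : ∀ i, Integrable (fun x => wNormSq pw (x - T i x)) μ) :
    ∫ z, discrep pw η T z ∂γ = ∑ i, η i * ∫ x, wNormSq pw (x - T i x) ∂μ := by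
  obtain ⟨-, rfl, rfl⟩ := hγ
  have hfixγ : ∀ᵐ z ∂γ, ∀ i, 0 < η i → T i z.2 = z.2 :=
    ae_of_ae_map (p := fun y => ∀ i, 0 < η i → T i y = y) measurable_snd.aemeasurable hfix
  have hintγ : ∀ i, Integrable (fun z : PiLp 2 E × PiLp 2 E => wNormSq pw (z.1 - T i z.1)) γ :=
    fun i => (integrable_map_measure (hint i).aestronglyMeasurable measurable_fst.aemeasurable).1
      (hint i)
  calc ∫ z, discrep pw η T z ∂γ = ∫ z, ∑ i, η i * wNormSq pw (z.1 - T i z.1) ∂γ := by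
        refine integral_congr_ae (hfixγ.mono fun z hz => Finset.sum_congr rfl fun i _ => ?_)
        rcases (hη i).lt_or_eq with hi | hi
        · rw [hz i hi, sub_self, sub_zero]
        · simp [← hi]
    _ = _ := by
        rw [integral_finsetSum _ fun i _ => (hintγ i).const_mul _]
        refine Finset.sum_congr rfl fun i _ => ?_
        rw [integral_const_mul,
          integral_map measurable_fst.aemeasurable (hint i).aestronglyMeasurable]

lemma W2_markovOp_le (hη : ∀ i, 0 ≤ η i) (hηsum : ∑ i, η i = 1) (hT : ∀ i, Measurable (T i))
    (μ : Measure (PiLp 2 E)) [IsProbabilityMeasure μ]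
    (hint : ∀ i, Integrable (fun x => wNormSq pw (x - T i x)) μ) :
    W2 pw μ (markovOp η T μ) ≤ √(∑ i, η i * ∫ x, wNormSq pw (x - T i x) ∂μ) := by
  have hgraph : ∀ i, Measurable fun x => (x, T i x) := fun i => measurable_id.prodMk (hT i)
  have := fun i => Measure.isProbabilityMeasure_map (μ := μ) (hgraph i).aemeasurable
  set γ := ∑ i, ENNReal.ofReal (η i) • μ.map fun x => (x, T i x)
  have hγ : IsCoupling γ μ (markovOp η T μ) := by
    refine ⟨isProbabilityMeasure_mixture hη hηsum _, ?_, ?_⟩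
    · simp only [γ, map_mixture measurable_fst, Measure.map_map measurable_fst (hgraph _),
        Function.comp_def, Measure.map_id']
      exact mixture_const hη hηsum μ
    · simp only [γ, map_mixture measurable_snd, Measure.map_map measurable_snd (hgraph _)]
      rfl
  refine (W2_le_couplingCost hγ).trans_eq ?_
  rw [couplingCost, integral_mixture_map (f := fun z => wNormSq pw (z.1 - z.2)) hη μ hgraph
    (continuous_wNormSq.comp (continuous_fst.sub continuous_snd)).stronglyMeasurable hint]

end Markov

section InvariantDistance

variable {η : I → ℝ} {T : I → PiLp 2 E → PiLp 2 E} {G : Set (PiLp 2 E)}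

lemma ae_fixed_of_markovOp_eq_self (hη : ∀ i, 0 ≤ η i) (hηsum : ∑ i, η i = 1)
    (hT : ∀ i, Continuous (T i)) (hG : IsCompact G) {C : Set (PiLp 2 E)}
    (hC : C = {x ∈ G | ∀ i, 0 < η i → T i x = x}) {y : PiLp 2 E}
    (hpara : ∀ x ∈ G \ C, ∑ i, η i * wNormSq pw (T i x - y) < wNormSq pw (x - y))
    {π : Measure (PiLp 2 E)} (hπ : markovOp η T π = π) (hπ₂ : MemP2 G π) :
    ∀ᵐ x ∂π, ∀ i, 0 < η i → T i x = x := by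
  have hle : ∀ x ∈ G, ∑ i, η i * wNormSq pw (T i x - y) ≤ wNormSq pw (x - y) := by
    intro x hx
    by_cases hxC : x ∈ C
    · rw [hC] at hxC
      exact (sum_mul_apply_eq_of_fixed hη hηsum hxC.2 fun z => wNormSq pw (z - y)).le
    · exact (hpara x ⟨hx, hxC⟩).le
  filter_upwards [ae_mem_of_markovOp_eq_self hη hT hG
    (continuous_wNormSq.comp (continuous_id.sub continuous_const)) hle hpara hπ hπ₂] with x hx
  rw [hC] at hx
  exact hx.2

lemma dInv_nonneg (μ : Measure (PiLp 2 E)) : 0 ≤ dInv pw η T G μ :=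
  Real.sInf_nonneg <| by rintro _ ⟨π, _, _, rfl⟩; exact W2_nonneg μ π

lemma dInv_le_W2 {μ π : Measure (PiLp 2 E)} (hπ : markovOp η T π = π) (hπ₂ : MemP2 G π) :
    dInv pw η T G μ ≤ W2 pw μ π :=
  csInf_le ⟨0, by rintro _ ⟨π, _, _, rfl⟩; exact W2_nonneg μ π⟩ ⟨π, hπ, hπ₂, rfl⟩

lemma dInv_le_W2_add_dInv (hp : ∀ j, 0 ≤ pw j) {μ ν : Measure (PiLp 2 E)} (hμ : MemP2 G μ)
    (hν : MemP2 G ν) (hinv : ∃ π, markovOp η T π = π ∧ MemP2 G π) :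
    dInv pw η T G μ ≤ W2 pw μ ν + dInv pw η T G ν := by
  obtain ⟨π₀, hπ₀, hπ₀₂⟩ := hinv
  suffices dInv pw η T G μ - W2 pw μ ν ≤ dInv pw η T G ν by linarith
  refine le_csInf ⟨_, π₀, hπ₀, hπ₀₂, rfl⟩ ?_
  rintro _ ⟨π, hπ, hπ₂, rfl⟩
  linarith [dInv_le_W2 (pw := pw) (μ := μ) hπ hπ₂, W2_triangle hp hμ hν hπ₂]

end InvariantDistance

theorem statement13_general
    (M : I → Finset (Fin m))
    (η : I → ℝ) (hη : ∀ i, 0 ≤ η i) (hηsum : ∑ i : I, η i = 1)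
    (pw : Fin m → ℝ)
    (hp : ∀ j, 0 < pw j)
    (T' : ∀ j, PiLp 2 E → E j) (hcont : ∀ j, Continuous (T' j))
    (G : Set (PiLp 2 E)) (hG : IsCompact G)
    (hself : ∀ i, Set.MapsTo (blockMap M T' i) G G)
    (C : Set (PiLp 2 E))
    (hC : C = {x ∈ G | ∀ i, 0 < η i → blockMap M T' i x = x})
    (hCne : C.Nonempty)
    (hpara : ∀ y ∈ C, ∀ x ∈ G \ C,
      ∑ i : I, η i * wNormSq pw (blockMap M T' i x - y) < wNormSq pw (x - y))
    (θ : ℝ → ℝ)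
    (hθcont : ContinuousOn θ (Set.Ici 0)) (hθ0 : θ 0 = 0)
    (hmono : ∀ μ₀ : Measure (PiLp 2 E), MemP2 G μ₀ →
      ∀ k : ℕ, dInv pw η (blockMap M T') G ((markovOp η (blockMap M T'))^[k + 1] μ₀)
        ≤ θ (dInv pw η (blockMap M T') G ((markovOp η (blockMap M T'))^[k] μ₀)))
    (ψinv : ℝ → ℝ)
    (hψmono : StrictMonoOn ψinv (Set.Ici 0))
    (hψ0 : ψinv 0 = 0)
    (hψleft : ∀ t, 0 ≤ t → ψinv (t - θ t) = t)
    (hψright : ∀ s, 0 ≤ s → ψinv s - θ (ψinv s) = s) :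
    ∀ μ : Measure (PiLp 2 E), MemP2 G μ →
      dInv pw η (blockMap M T') G μ ≤ ψinv (Psi pw η (blockMap M T') G μ) := by
  intro μ hμ
  have := hμ.1
  set T := blockMap M T'
  have hT : ∀ i, Continuous (T i) := continuous_blockMap hcont
  have hTm : ∀ i, Measurable (T i) := fun i => (hT i).measurable
  obtain ⟨c, hc⟩ := hCne
  have hcG : c ∈ G := (hC ▸ hc).1
  have hcinv : markovOp η T (Measure.dirac c) = Measure.dirac c :=
    markovOp_dirac hη hηsum hTm (hC ▸ hc).2
  have hint : ∀ i, Integrable (fun x => wNormSq pw (x - T i x)) μ := fun i =>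
    (continuous_wNormSq.comp (continuous_id.sub (hT i))).integrable_of_isCompact_of_measure_compl
      hG hμ.2.1
  set d := dInv pw η T G μ
  have hstep : d - θ d ≤ W2 pw μ (markovOp η T μ) := by
    have h₁ := dInv_le_W2_add_dInv (fun j => (hp j).le) hμ
      (markovOp_memP2 hη hηsum hTm hself hG hμ) ⟨_, hcinv, memP2_dirac hG hcG⟩
    have h₂ := hmono μ hμ 0
    simp only [Function.iterate_zero, zero_add, Function.iterate_one, id_eq] at h₂
    linarith
  have hPsi : d - θ d ≤ Psi pw η T G μ := by
    refine le_csInf ⟨_, _, _, hcinv, memP2_dirac hG hcG, isOptimalCoupling_prod_dirac μ c, rfl⟩ ?_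
    rintro _ ⟨π, γ, hπ, hπ₂, hγ, rfl⟩
    rw [integral_discrep_eq hη hγ.1
      (ae_fixed_of_markovOp_eq_self hη hηsum hT hG hC (hpara c hc) hπ hπ₂) hint]
    exact hstep.trans (W2_markovOp_le hη hηsum hTm μ hint)
  have hd : 0 ≤ d - θ d :=
    sub_nonneg_of_leftInvOn hθcont hθ0 hψmono hψ0 hψleft hψright (dInv_nonneg μ)
  calc d = ψinv (d - θ d) := (hψleft d (dInv_nonneg μ)).symm
    _ ≤ ψinv (Psi pw η T G μ) := hψmono.monotoneOn hd (hd.trans hPsi) hPsi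

/-- necessity of gauge metric subregularity of `Ψ` with gauge `(Id − θ)⁻¹` when all
sequences of measures generated by the Markov operator are gauge monotone with rate `θ`. -/
theorem statement13
    (M : I → Finset (Fin m)) (hM : ∀ i, (M i).Nonempty)
    (i₁ : I) (hi₁ : M i₁ = Finset.univ)
    (η : I → ℝ) (hη : ∀ i, 0 ≤ η i) (hηsum : ∑ i : I, η i = 1)
    (pw : Fin m → ℝ) (hpw : ∀ j, pw j = ∑ i : I, if j ∈ M i then η i else 0)
    (hp : ∀ j, 0 < pw j)
    (T' : ∀ j, PiLp 2 E → E j) (hcont : ∀ j, Continuous (T' j))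
    (G : Set (PiLp 2 E)) (hG : IsCompact G)
    (hself : ∀ i, Set.MapsTo (blockMap M T' i) G G)
    (C : Set (PiLp 2 E))
    (hC : C = {x ∈ G | ∀ i, 0 < η i → blockMap M T' i x = x})
    (hCne : C.Nonempty)
    (hpara : ∀ y ∈ C, ∀ x ∈ G \ C,
      ∑ i : I, η i * wNormSq pw (blockMap M T' i x - y) < wNormSq pw (x - y))
    (θ : ℝ → ℝ) (tbar : ℝ)
    (hθcont : ContinuousOn θ (Set.Ici 0)) (hθ0 : θ 0 = 0)
    (hθ : ∀ t, 0 < t → t < tbar → 0 < θ t ∧ θ t ≤ t)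
    (hmono : ∀ μ₀ : Measure (PiLp 2 E), MemP2 G μ₀ →
      ∀ k : ℕ, dInv pw η (blockMap M T') G ((markovOp η (blockMap M T'))^[k + 1] μ₀)
        ≤ θ (dInv pw η (blockMap M T') G ((markovOp η (blockMap M T'))^[k] μ₀)))
    (ψinv : ℝ → ℝ)
    (hψcont : ContinuousOn ψinv (Set.Ici 0)) (hψmono : StrictMonoOn ψinv (Set.Ici 0))
    (hψ0 : ψinv 0 = 0)
    (hψleft : ∀ t, 0 ≤ t → ψinv (t - θ t) = t)
    (hψright : ∀ s, 0 ≤ s → ψinv s - θ (ψinv s) = s) :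
    ∀ μ : Measure (PiLp 2 E), MemP2 G μ →
      dInv pw η (blockMap M T') G μ ≤ ψinv (Psi pw η (blockMap M T') G μ) :=
  statement13_general M η hη hηsum pw hp T' hcont G hG hself C hC hCne hpara θ hθcont hθ0 hmono ψinv
    hψmono hψ0 hψleft hψright
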